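/- Let D be a digraph and let P, Q be two disjoint dipaths from {s1,s2} to {t1,t2}. Suppose C = {uv, u'v'} is a tight crossing (uv' ∈ A(P), u'v ∈ A(Q), with u, v' ∈ V(P), u', v ∈ V(Q)) and there exists a C-backward path R of length at least 2 (a dipath internally disjoint from P and Q with initial vertex on P[v', t(P)] and terminal vertex on P[s(P), u], or with initial vertex on Q[v, t(Q)] and terminal vertex on Q[s(Q), u']). Then D contains an ({s1,s2},{t1,t2})-shunt. -/

import Mathlib

open List

variable {V : Type*}

/-- The interior (internal vertices) of a path given as a list of vertices. -/
def interiorL (l : List V) : List V := l.tail.dropLast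

/-- `l` is a directed path (dipath) in the digraph `D`. -/
def IsDipath (D : V → V → Prop) (l : List V) : Prop :=
  l ≠ [] ∧ l.Chain' D ∧ l.Nodup

/-- `l` is a dipath from `x` to `y` in `D`. -/
def DipathFromTo (D : V → V → Prop) (l : List V) (x y : V) : Prop :=
  IsDipath D l ∧ l.head? = some x ∧ l.getLast? = some y

/-- `l` is a directed cycle in `D` (length at least 2, digraphs being strict). -/
def IsDicycle (D : V → V → Prop) (l : List V) : Prop :=
  2 ≤ l.length ∧ l.Nodup ∧ l.Chain' D ∧ ∃ a ∈ l.getLast?, ∃ b ∈ l.head?, D a b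

/-- The restriction (induced subdigraph) of `D` to the vertex set `A`. -/
def restrict (D : V → V → Prop) (A : Set V) : V → V → Prop :=
  fun u v => D u v ∧ u ∈ A ∧ v ∈ A

/-- Reachability by a dipath inside the vertex set `A`. -/
def ReachIn (D : V → V → Prop) (A : Set V) : V → V → Prop :=
  Relation.ReflTransGen (restrict D A)

/-- Reachability by a dipath. -/
def Reach (D : V → V → Prop) : V → V → Prop := Relation.ReflTransGen D

/-- `x` appears strictly before `y` along the list `l`. -/
def Before (l : List V) (x y : V) : Prop :=
  ∃ i j : ℕ, i < j ∧ l[i]? = some x ∧ l[j]? = some y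

/-- `x` and `y` are consecutive (in this order) in `l`. -/
def ConsecIn (l : List V) (x y : V) : Prop :=
  ∃ i : ℕ, l[i]? = some x ∧ l[i + 1]? = some y

/-- `D` contains a subdivision of `F`, realized by the branch-vertex map `branch` and,
for every arc `uv` of `F`, the dipath `P u v` from `branch u` to `branch v`;
the paths have length at least one and are internally disjoint from each other
and from the branch vertices. -/
def IsSubdivisionIn {W : Type*} (F : W → W → Prop) (D : V → V → Prop)
    (branch : W → V) (P : W → W → List V) : Prop :=
  Function.Injective branch ∧
  (∀ u v : W, F u v →
    DipathFromTo D (P u v) (branch u) (branch v) ∧ 2 ≤ (P u v).length) ∧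
  (∀ u v : W, F u v → ∀ x ∈ interiorL (P u v), ∀ w : W, x ≠ branch w) ∧
  (∀ u v u' v' : W, F u v → F u' v' → (u, v) ≠ (u', v') →
    ∀ x ∈ interiorL (P u v), x ∉ interiorL (P u' v'))

/-- `D` contains a subdivision of `F`. -/
def ContainsSubdivision {W : Type*} (F : W → W → Prop) (D : V → V → Prop) : Prop :=
  ∃ (branch : W → V) (P : W → W → List V), IsSubdivisionIn F D branch P

/-- An `({s1,s2},{t1,t2})`-shunt: dipaths `P`, `Q`, `R` with `R` of length at least 2,
`s(R)` on `P`, `t(R)` on `Q`, with `P`, `Q` and the interior of `R` pairwise disjoint,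
`{s(P),s(Q)} = {s1,s2}` and `{t(P),t(Q)} = {t1,t2}`. -/
def IsShunt (D : V → V → Prop) (s1 s2 t1 t2 : V) : Prop :=
  ∃ P Q R : List V,
    IsDipath D P ∧ IsDipath D Q ∧ IsDipath D R ∧ 3 ≤ R.length ∧
    (∀ z, z ∈ P → z ∉ Q) ∧
    (∀ a ∈ R.head?, a ∈ P) ∧ (∀ a ∈ R.getLast?, a ∈ Q) ∧
    (∀ z ∈ interiorL R, z ∉ P ∧ z ∉ Q) ∧
    ((P.head? = some s1 ∧ Q.head? = some s2) ∨
      (P.head? = some s2 ∧ Q.head? = some s1)) ∧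
    ((P.getLast? = some t1 ∧ Q.getLast? = some t2) ∨
      (P.getLast? = some t2 ∧ Q.getLast? = some t1))

/-!
Cut `P` at its arc `uv'` and `Q` at its arc `u'v`, and exchange the tails through the crossing
arcs: `P[s(P), u] · uv · Q[v, t(Q)]` and `Q[s(Q), u'] · u'v' · P[v', t(P)]` are disjoint dipaths,
again from `{s1, s2}` to `{t1, t2}`. A backward path on `P` starts on `P[v', t(P)]`, now part
of the second path, and ends on `P[s(P), u]`, now part of the first, so it is a shunt for the new
pair; a backward path on `Q` is symmetric.
-/

section Positions

variable {α : Type*} {A B : List α} {x y : α}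

theorem ConsecIn.exists_append {l : List α} (h : ConsecIn l x y) :
    ∃ A B, l = A ++ B ∧ A.getLast? = some x ∧ B.head? = some y := by
  obtain ⟨i, hx, hy⟩ := h
  refine ⟨l.take (i + 1), l.drop (i + 1), (take_append_drop _ _).symm, ?_, by rwa [head?_drop]⟩
  rw [getLast?_take, if_neg i.succ_ne_zero, Nat.add_sub_cancel, hx, Option.some_or]

theorem Before.mem_right (hnd : (A ++ B).Nodup) (hx : x ∈ B) (h : Before (A ++ B) x y) :
    y ∈ B := by
  obtain ⟨i, j, hij, hi, hj⟩ := h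
  obtain ⟨k, hk⟩ := getElem?_of_mem hx
  have hk' : (A ++ B)[A.length + k]? = some x := by
    rwa [getElem?_append_right (Nat.le_add_right _ _), Nat.add_sub_cancel_left]
  have hik : i = A.length + k :=
    (getElem?_inj (List.getElem?_eq_some_iff.mp hi).1 hnd).mp (hi.trans hk'.symm)
  rw [getElem?_append_right (by omega)] at hj
  exact mem_of_getElem? hj

theorem Before.mem_left (hnd : (A ++ B).Nodup) (hy : y ∈ A) (h : Before (A ++ B) x y) :
    x ∈ A := by
  obtain ⟨i, j, hij, hi, hj⟩ := h
  obtain ⟨k, hk⟩ := getElem?_of_mem hy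
  have hkA : k < A.length := (List.getElem?_eq_some_iff.mp hk).1
  have hjk : j = k := (getElem?_inj (List.getElem?_eq_some_iff.mp hj).1 hnd).mp
    (hj.trans ((getElem?_append_left hkA).trans hk).symm)
  rw [getElem?_append_left (by omega)] at hi
  exact mem_of_getElem? hi

theorem mem_right_of_eq_or_before (hnd : (A ++ B).Nodup) (hx : x ∈ B)
    (h : y = x ∨ Before (A ++ B) x y) : y ∈ B :=
  h.elim (· ▸ hx) (Before.mem_right hnd hx)

theorem mem_left_of_eq_or_before (hnd : (A ++ B).Nodup) (hy : y ∈ A)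
    (h : x = y ∨ Before (A ++ B) x y) : x ∈ A :=
  h.elim (· ▸ hy) (Before.mem_left hnd hy)

end Positions

section Exchange

variable {D : V → V → Prop} {A B C E : List V}

theorem IsDipath.left_append_right_of_disjoint (hP : IsDipath D (A ++ B))
    (hQ : IsDipath D (C ++ E)) (hdisj : ∀ z, z ∈ A ++ B → z ∉ C ++ E) (hA : A ≠ [])
    (hjoin : ∀ a ∈ A.getLast?, ∀ b ∈ E.head?, D a b) : IsDipath D (A ++ E) := by
  refine ⟨append_ne_nil_of_left_ne_nil hA _,
    hP.2.1.left_of_append.append hQ.2.1.right_of_append hjoin,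
    nodup_append'.mpr ⟨hP.2.2.of_append_left, hQ.2.2.of_append_right, ?_⟩⟩
  exact fun z hzA hzE => hdisj z (mem_append_left _ hzA) (mem_append_right _ hzE)

theorem isShunt_of_exchange_at_crossing {s1 s2 t1 t2 u v u' v' : V} {R : List V}
    (hP : IsDipath D (A ++ B)) (hQ : IsDipath D (C ++ E))
    (hdisj : ∀ z, z ∈ A ++ B → z ∉ C ++ E)
    (hs : ((A ++ B).head? = some s1 ∧ (C ++ E).head? = some s2) ∨
      ((A ++ B).head? = some s2 ∧ (C ++ E).head? = some s1))
    (ht : ((A ++ B).getLast? = some t1 ∧ (C ++ E).getLast? = some t2) ∨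
      ((A ++ B).getLast? = some t2 ∧ (C ++ E).getLast? = some t1))
    (hA : A.getLast? = some u) (hB : B.head? = some v')
    (hC : C.getLast? = some u') (hE : E.head? = some v)
    (huv : D u v) (hu'v' : D u' v')
    (hR : IsDipath D R) (hRlen : 3 ≤ R.length)
    (hRint : ∀ z ∈ interiorL R, z ∉ A ++ B ∧ z ∉ C ++ E)
    (hhead : ∀ h ∈ R.head?, h ∈ B) (hlast : ∀ t ∈ R.getLast?, t ∈ A) :
    IsShunt D s1 s2 t1 t2 := by
  have hA0 : A ≠ [] := by rintro rfl; simp at hA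
  have hB0 : B ≠ [] := by rintro rfl; simp at hB
  have hC0 : C ≠ [] := by rintro rfl; simp at hC
  have hE0 : E ≠ [] := by rintro rfl; simp at hE
  have hjoinAE : ∀ a ∈ A.getLast?, ∀ b ∈ E.head?, D a b := by
    simpa [hA, hE] using huv
  have hjoinCB : ∀ a ∈ C.getLast?, ∀ b ∈ B.head?, D a b := by
    simpa [hC, hB] using hu'v'
  refine ⟨C ++ B, A ++ E, R,
    hQ.left_append_right_of_disjoint hP (fun z hQz hPz => hdisj z hPz hQz) hC0 hjoinCB,
    hP.left_append_right_of_disjoint hQ hdisj hA0 hjoinAE, hR, hRlen, ?_,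
    fun h hh => mem_append_right _ (hhead h hh), fun t ht => mem_append_left _ (hlast t ht),
    ?_, ?_, ?_⟩
  · intro z hz hz'
    rcases mem_append.mp hz with hzC | hzB <;> rcases mem_append.mp hz' with hzA | hzE
    · exact hdisj z (mem_append_left _ hzA) (mem_append_left _ hzC)
    · exact disjoint_of_nodup_append hQ.2.2 hzC hzE
    · exact disjoint_of_nodup_append hP.2.2 hzA hzB
    · exact hdisj z (mem_append_right _ hzB) (mem_append_right _ hzE)
  · intro z hz
    obtain ⟨hzP, hzQ⟩ := hRint z hz
    simp only [mem_append, not_or] at hzP hzQ ⊢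
    exact ⟨⟨hzQ.1, hzP.2⟩, ⟨hzP.1, hzQ.2⟩⟩
  · rw [head?_append_of_ne_nil _ hC0, head?_append_of_ne_nil _ hA0,
      ← head?_append_of_ne_nil _ hC0 (l₂ := E), ← head?_append_of_ne_nil _ hA0 (l₂ := B)]
    exact hs.symm.imp And.symm And.symm
  · rwa [getLast?_append_of_ne_nil _ hB0, getLast?_append_of_ne_nil _ hE0,
      ← getLast?_append_of_ne_nil A hB0, ← getLast?_append_of_ne_nil C hE0]

end Exchange

theorem shunt_of_backward_path (D : V → V → Prop) (s1 s2 t1 t2 : V)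
    (P Q : List V) (hP : IsDipath D P) (hQ : IsDipath D Q)
    (hdisj : ∀ z, z ∈ P → z ∉ Q)
    (hs : (P.head? = some s1 ∧ Q.head? = some s2) ∨
      (P.head? = some s2 ∧ Q.head? = some s1))
    (ht : (P.getLast? = some t1 ∧ Q.getLast? = some t2) ∨
      (P.getLast? = some t2 ∧ Q.getLast? = some t1))
    (u v u' v' : V)
    (huv : D u v) (hu'v' : D u' v')
    (htight1 : ConsecIn P u v') (htight2 : ConsecIn Q u' v)
    (R : List V) (hR : IsDipath D R) (hRlen : 3 ≤ R.length)
    (hRint : ∀ z ∈ interiorL R, z ∉ P ∧ z ∉ Q)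
    (hRends :
      ((∀ h ∈ R.head?, h ∈ P ∧ (h = v' ∨ Before P v' h)) ∧
        (∀ t ∈ R.getLast?, t ∈ P ∧ (t = u ∨ Before P t u))) ∨
      ((∀ h ∈ R.head?, h ∈ Q ∧ (h = v ∨ Before Q v h)) ∧
        (∀ t ∈ R.getLast?, t ∈ Q ∧ (t = u' ∨ Before Q t u')))) :
    IsShunt D s1 s2 t1 t2 := by
  obtain ⟨A, B, rfl, hA, hB⟩ := htight1.exists_append
  obtain ⟨C, E, rfl, hC, hE⟩ := htight2.exists_append
  rcases hRends with ⟨hhead, hlast⟩ | ⟨hhead, hlast⟩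
  · exact isShunt_of_exchange_at_crossing hP hQ hdisj hs ht hA hB hC hE huv hu'v' hR hRlen hRint
      (fun h hh => mem_right_of_eq_or_before hP.2.2 (mem_of_mem_head? hB) (hhead h hh).2)
      (fun t ht => mem_left_of_eq_or_before hP.2.2 (mem_of_mem_getLast? hA) (hlast t ht).2)
  · exact isShunt_of_exchange_at_crossing hQ hP (fun z hzQ hzP => hdisj z hzP hzQ)
      (hs.symm.imp And.symm And.symm) (ht.symm.imp And.symm And.symm) hC hE hA hB hu'v' huv
      hR hRlen (fun z hz => (hRint z hz).symm)
      (fun h hh => mem_right_of_eq_or_before hQ.2.2 (mem_of_mem_head? hE) (hhead h hh).2)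
      (fun t ht => mem_left_of_eq_or_before hQ.2.2 (mem_of_mem_getLast? hC) (hlast t ht).2)
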